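/- Let H be a real Hilbert space, f : H → ℝ strongly quasiconvex with value γ > 0 with minimizer x*, let c > 0 and (c_k) a sequence of reals with c_k ≥ c for all k, and let (x^k) be a sequence in H with x^{k+1} ∈ Prox_{c_k f}(x^k) for all k ∈ ℕ. Let b ≥ ‖x^0 − x*‖², set λ₀ = (1/2)·γc/(1 + γc), and define φ(ε) = ⌈4b/(ε²((1−λ₀)γc − λ₀)²)⌉ + 1 for ε > 0. Then for every ε > 0 and every k ≥ φ(√(2cε)) + 1: f(x^k) − f(x*) < ε. -/

import Mathlib

/-!
Compare a prox step `y ∈ Prox_{βf}(x)` with the point `(1 - λ) y + λ x*` of the segment towards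
the minimizer. Strong quasiconvexity makes `f` drop there by `λ (1 - λ) (γ/2) ‖y - x*‖²`, while
the quadratic penalty grows by at most `λ/(2β) (‖x - x*‖² - (1 - λ) ‖y - x*‖²)`. Since `y`
minimizes the prox objective, `(1 - λ)(1 + γβ) ‖y - x*‖² ≤ ‖x - x*‖²`. For `β = c_k ≥ c` and
`λ = λ₀` this contracts the squared distance to `x*` by the factor `1 + r`,
`r = (1 - λ₀)γc - λ₀ = γc/2`, so `‖xⁿ - x*‖² ≤ b / (1 + r)ⁿ`. Bernoulli's inequality turns
`n > ⌈4b/(δ² r²)⌉` into `‖xⁿ - x*‖² < δ² = 2cε`, and one more prox step, compared with `x*`,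
gives `f(xⁿ⁺¹) - f(x*) ≤ ‖xⁿ - x*‖²/(2c) < ε`.
-/

section ProxPoint

variable {H : Type*} [NormedAddCommGroup H]

/-- `y` minimizes `z ↦ f z + ‖z - x‖² / (2β)`, i.e. `y ∈ Prox_{βf}(x)`. -/
def IsProxPoint (f : H → ℝ) (β : ℝ) (x y : H) : Prop :=
  ∀ z : H, f y + (1 / (2 * β)) * ‖y - x‖ ^ 2 ≤ f z + (1 / (2 * β)) * ‖z - x‖ ^ 2

theorem IsProxPoint.le_add_norm_sq {f : H → ℝ} {β : ℝ} {x y : H} (hy : IsProxPoint f β x y)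
    (hβ : 0 < β) (z : H) :
    f y ≤ f z + (1 / (2 * β)) * ‖x - z‖ ^ 2 := by
  have hpenalty : 0 ≤ (1 / (2 * β)) * ‖y - x‖ ^ 2 := by positivity
  linarith [norm_sub_rev z x ▸ hy z]

variable [InnerProductSpace ℝ H]

def IsStronglyQuasiconvex (γ : ℝ) (f : H → ℝ) : Prop :=
  ∀ x y : H, ∀ t ∈ Set.Icc (0 : ℝ) 1,
    f ((1 - t) • x + t • y) ≤ max (f x) (f y) - t * (1 - t) * (γ / 2) * ‖x - y‖ ^ 2

theorem norm_one_sub_smul_add_smul_sq (a b : H) (t : ℝ) :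
    ‖(1 - t) • a + t • b‖ ^ 2 = (1 - t) * ‖a‖ ^ 2 + t * ‖b‖ ^ 2 - t * (1 - t) * ‖a - b‖ ^ 2 := by
  rw [norm_add_sq_real, norm_sub_sq_real, norm_smul, norm_smul, real_inner_smul_left,
    real_inner_smul_right, mul_pow, mul_pow, Real.norm_eq_abs, Real.norm_eq_abs, sq_abs, sq_abs]
  ring

theorem IsProxPoint.one_sub_mul_one_add_mul_norm_sq_le {f : H → ℝ} {β γ : ℝ} {x y xs : H}
    (hy : IsProxPoint f β x y) (hf : IsStronglyQuasiconvex γ f) (hxs : ∀ z, f xs ≤ f z)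
    (hβ : 0 < β) {t : ℝ} (ht0 : 0 < t) (ht1 : t ≤ 1) :
    (1 - t) * (1 + γ * β) * ‖y - xs‖ ^ 2 ≤ ‖x - xs‖ ^ 2 := by
  have hdrop := hf y xs t ⟨ht0.le, ht1⟩
  rw [max_eq_left (hxs y)] at hdrop
  have hprox := hy ((1 - t) • y + t • xs)
  have hsegment : (1 - t) • y + t • xs - x = (1 - t) • (y - x) + t • (xs - x) := by module
  rw [hsegment, norm_one_sub_smul_add_smul_sq, sub_sub_sub_cancel_right, norm_sub_rev xs] at hprox
  have hweighted : t * (‖y - x‖ ^ 2 + (1 - t) * (1 + γ * β) * ‖y - xs‖ ^ 2) ≤ t * ‖x - xs‖ ^ 2 :=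
    calc t * (‖y - x‖ ^ 2 + (1 - t) * (1 + γ * β) * ‖y - xs‖ ^ 2)
        = 2 * β * (1 / (2 * β) * (t * ‖y - x‖ ^ 2 + t * (1 - t) * ‖y - xs‖ ^ 2)
            + t * (1 - t) * (γ / 2) * ‖y - xs‖ ^ 2) := by field_simp; ring
      _ ≤ 2 * β * (1 / (2 * β) * (t * ‖x - xs‖ ^ 2)) := by gcongr; linarith
      _ = t * ‖x - xs‖ ^ 2 := by field_simp
  linarith [le_of_mul_le_mul_left hweighted ht0, sq_nonneg ‖y - x‖]

theorem IsProxPoint.one_sub_mul_one_add_mul_norm_sq_le_of_le {f : H → ℝ} {β γ c : ℝ}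
    {x y xs : H} (hy : IsProxPoint f β x y) (hf : IsStronglyQuasiconvex γ f)
    (hxs : ∀ z, f xs ≤ f z) (hγ : 0 ≤ γ) (hc : 0 < c) (hcβ : c ≤ β) {t : ℝ} (ht0 : 0 < t)
    (ht1 : t ≤ 1) :
    (1 - t) * (1 + γ * c) * ‖y - xs‖ ^ 2 ≤ ‖x - xs‖ ^ 2 :=
  calc (1 - t) * (1 + γ * c) * ‖y - xs‖ ^ 2
      ≤ (1 - t) * (1 + γ * β) * ‖y - xs‖ ^ 2 := by gcongr
    _ ≤ ‖x - xs‖ ^ 2 := hy.one_sub_mul_one_add_mul_norm_sq_le hf hxs (hc.trans_le hcβ) ht0 ht1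

end ProxPoint

theorem mul_pow_le_of_mul_le_succ {q : ℝ} (hq : 0 ≤ q) {a : ℕ → ℝ}
    (ha : ∀ k, q * a (k + 1) ≤ a k) (n : ℕ) : q ^ n * a n ≤ a 0 := by
  induction n with
  | zero => simp
  | succ n ih =>
    calc q ^ (n + 1) * a (n + 1) = q ^ n * (q * a (n + 1)) := by ring
      _ ≤ q ^ n * a n := by gcongr; exact ha n
      _ ≤ a 0 := ih

theorem natCast_mul_sq_lt_one_add_pow_succ {r : ℝ} (hr : 0 ≤ r) (n : ℕ) :
    n * r ^ 2 < (1 + r) ^ (n + 1) := by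
  have hbernoulli := one_add_mul_le_pow (by linarith : (-2 : ℝ) ≤ r) n
  rw [pow_succ (1 + r)]
  nlinarith [mul_le_mul_of_nonneg_right hbernoulli (by linarith : 0 ≤ 1 + r)]

theorem lt_of_one_add_pow_mul_le {r ε a b : ℝ} {n : ℕ} (hr : 0 < r) (hε : 0 < ε)
    (hab : (1 + r) ^ n * a ≤ b) (hn : ⌈b / (ε * r ^ 2)⌉₊ < n) : a < ε := by
  set m := ⌈b / (ε * r ^ 2)⌉₊
  have hbm : b ≤ m * r ^ 2 * ε := by
    have := Nat.le_ceil (b / (ε * r ^ 2))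
    rw [div_le_iff₀ (by positivity)] at this
    linarith
  have hgrowth : (m : ℝ) * r ^ 2 < (1 + r) ^ n :=
    (natCast_mul_sq_lt_one_add_pow_succ hr.le m).trans_le (pow_le_pow_right₀ (by linarith) hn)
  have : (1 + r) ^ n * a < (1 + r) ^ n * ε := by nlinarith
  exact lt_of_mul_lt_mul_left this (by positivity)

theorem ppa_rate_of_convergence_values_general
    {H : Type*} [NormedAddCommGroup H] [InnerProductSpace ℝ H]
    (f : H → ℝ) (γ : ℝ) (hγ : 0 < γ)
    (hf : ∀ x y : H, ∀ t ∈ Set.Icc (0 : ℝ) 1,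
      f ((1 - t) • x + t • y) ≤ max (f x) (f y) - t * (1 - t) * (γ / 2) * ‖x - y‖ ^ 2)
    (xs : H) (hxs : ∀ y : H, f xs ≤ f y)
    (c : ℝ) (hc : 0 < c) (ck : ℕ → ℝ) (hck : ∀ k, c ≤ ck k)
    (x : ℕ → H)
    (hx : ∀ k : ℕ, ∀ y : H,
      f (x (k + 1)) + (1 / (2 * ck k)) * ‖x (k + 1) - x k‖ ^ 2
        ≤ f y + (1 / (2 * ck k)) * ‖y - x k‖ ^ 2)
    (b : ℝ) (hb : ‖x 0 - xs‖ ^ 2 ≤ b)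
    (l0 : ℝ) (hl0 : l0 = (1 / 2) * (γ * c / (1 + γ * c)))
    (φ : ℝ → ℕ)
    (hφ : ∀ ε : ℝ, φ ε = ⌈4 * b / (ε ^ 2 * ((1 - l0) * (γ * c) - l0) ^ 2)⌉₊ + 1) :
    ∀ ε > (0 : ℝ), ∀ k : ℕ, φ (Real.sqrt (2 * c * ε)) + 1 ≤ k →
      f (x k) - f xs < ε := by
  intro ε hε k hk
  obtain ⟨n, rfl⟩ : ∃ n, k = n + 1 := ⟨k - 1, by omega⟩
  have hγc : 0 < γ * c := by positivity
  have hl0_pos : 0 < l0 := by rw [hl0]; positivity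
  have hl0_le : l0 ≤ 1 := by
    have := div_le_one_of_le₀ (by linarith : γ * c ≤ 1 + γ * c) (by positivity)
    linarith
  have hr_eq : (1 - l0) * (γ * c) - l0 = γ * c / 2 := by subst hl0; field_simp; ring
  set r := (1 - l0) * (γ * c) - l0
  have hcontract (j : ℕ) : (1 + r) * ‖x (j + 1) - xs‖ ^ 2 ≤ ‖x j - xs‖ ^ 2 := by
    convert IsProxPoint.one_sub_mul_one_add_mul_norm_sq_le_of_le (hx j) hf hxs hγ.le hc (hck j)
      hl0_pos hl0_le using 2
    ring
  have hn : ⌈b / (2 * c * ε * r ^ 2)⌉₊ < n := by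
    have hb0 : 0 ≤ b := (sq_nonneg _).trans hb
    rw [hφ, Real.sq_sqrt (by positivity)] at hk
    have := Nat.ceil_mono (div_le_div_of_nonneg_right (by linarith : b ≤ 4 * b)
      (by positivity : 0 ≤ 2 * c * ε * r ^ 2))
    omega
  have hclose : ‖x n - xs‖ ^ 2 < 2 * c * ε :=
    lt_of_one_add_pow_mul_le (by rw [hr_eq]; positivity) (by positivity)
      ((mul_pow_le_of_mul_le_succ (a := fun j ↦ ‖x j - xs‖ ^ 2) (by linarith) hcontract n).trans
        hb) hn
  have hck_pos : 0 < ck n := hc.trans_le (hck n)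
  calc f (x (n + 1)) - f xs ≤ 1 / (2 * ck n) * ‖x n - xs‖ ^ 2 := by
        linarith [IsProxPoint.le_add_norm_sq (hx n) hck_pos xs]
    _ ≤ 1 / (2 * c) * ‖x n - xs‖ ^ 2 := by gcongr; exact hck n
    _ < 1 / (2 * c) * (2 * c * ε) := by gcongr
    _ = ε := by field_simp

/-- Explicit rate of convergence of the function values along the
proximal point algorithm towards the minimum of a strongly quasiconvex
function. -/
theorem ppa_rate_of_convergence_values
    {H : Type*} [NormedAddCommGroup H] [InnerProductSpace ℝ H] [CompleteSpace H]
    (f : H → ℝ) (γ : ℝ) (hγ : 0 < γ)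
    (hf : ∀ x y : H, ∀ t ∈ Set.Icc (0 : ℝ) 1,
      f ((1 - t) • x + t • y) ≤ max (f x) (f y) - t * (1 - t) * (γ / 2) * ‖x - y‖ ^ 2)
    (xs : H) (hxs : ∀ y : H, f xs ≤ f y)
    (c : ℝ) (hc : 0 < c) (ck : ℕ → ℝ) (hck : ∀ k, c ≤ ck k)
    (x : ℕ → H)
    (hx : ∀ k : ℕ, ∀ y : H,
      f (x (k + 1)) + (1 / (2 * ck k)) * ‖x (k + 1) - x k‖ ^ 2
        ≤ f y + (1 / (2 * ck k)) * ‖y - x k‖ ^ 2)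
    (b : ℝ) (hb : ‖x 0 - xs‖ ^ 2 ≤ b)
    (l0 : ℝ) (hl0 : l0 = (1 / 2) * (γ * c / (1 + γ * c)))
    (φ : ℝ → ℕ)
    (hφ : ∀ ε : ℝ, φ ε = ⌈4 * b / (ε ^ 2 * ((1 - l0) * (γ * c) - l0) ^ 2)⌉₊ + 1) :
    ∀ ε > (0 : ℝ), ∀ k : ℕ, φ (Real.sqrt (2 * c * ε)) + 1 ≤ k →
      f (x k) - f xs < ε :=
  ppa_rate_of_convergence_values_general f γ hγ hf xs hxs c hc ck hck x hx b hb l0 hl0 φ hφ
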